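/- Define σ_n = e^{−iδ} for n ≤ −1 and σ_n = e^{iδ} for n ≥ 0. Let y = (y_n)_{n∈ℤ} satisfy −Δ²y_{n−1} + q_n y_n = f_n for n ∈ ℤ₀ together with the impulse conditions y_{−1} = y₁ and Δy_{−1} = e^{2iδ} Δy₁. Then for all integers a ≤ −1 and b ≥ 2: (cos δ)·[∑_{n=a}^{−1} + ∑_{n=2}^{b}] (|Δy_n|² + q_n |y_n|²) = Re{ σ_b (Δy_b) conj(y_{b+1}) − σ_{a−1} (Δy_{a−1}) conj(y_a) + [∑_{n=a}^{−1} + ∑_{n=2}^{b}] σ_n f_n conj(y_n) }. -/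

import Mathlib

open ComplexConjugate

/- The nonhomogeneous problem (5.5)–(5.6): −Δ²y_{n−1} + q_n y_n = f_n on
   ℤ₀ = ℤ \ {0,1}, with impulse conditions y_{−1} = y₁, Δy_{−1} = e^{2iδ} Δy₁. -/
def IsSolQ (δ : ℝ) (q : ℤ → ℝ) (f : ℤ → ℂ) (y : ℤ → ℂ) : Prop :=
  (∀ n : ℤ, n ≠ 0 → n ≠ 1 →
    -(y (n + 1) - 2 * y n + y (n - 1)) + (q n : ℂ) * y n = f n) ∧
  y (-1) = y 1 ∧
  y 0 - y (-1) = Complex.exp (2 * (δ : ℂ) * Complex.I) * (y 2 - y 1)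

/-- σ_n = e^{−iδ} for n ≤ −1 and σ_n = e^{iδ} for n ≥ 0. -/
noncomputable def sigma (δ : ℝ) (n : ℤ) : ℂ :=
  if n ≤ -1 then Complex.exp (-(δ : ℂ) * Complex.I) else Complex.exp ((δ : ℂ) * Complex.I)

/- Multiplying the equation by conj y_n and summing by parts over a block m ≤ n ≤ k gives
∑ f_n conj y_n = ∑ (|Δy_n|² + q_n |y_n|²) − [Δy_n conj y_{n+1}]_{n=m-1}^{n=k}. Weighting the
blocks by σ = e^{∓iδ}, the two boundary terms at the impulse combine, by the impulse conditions,
into (e^{iδ} − e^{−iδ}) |Δy_1|², which is purely imaginary; taking real parts, Re σ_n = cos δ. -/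

open Finset

theorem Finset.sum_Icc_sub_int {M : Type*} [AddCommGroup M] (f : ℤ → M) {m n : ℤ}
    (hmn : m ≤ n + 1) : ∑ i ∈ Icc m n, (f (i + 1) - f i) = f (n + 1) - f m := by
  induction n, (show m - 1 ≤ n by omega) using Int.leInduction with
  | base => simp
  | succ n hn ih =>
    rw [← insert_Icc_right_eq_Icc_add_one (by omega), sum_insert (by simp),
      ih (by omega)]
    abel

theorem mul_conj_eq_energy_sub_flux {q : ℤ → ℝ} {f y : ℤ → ℂ} {n : ℤ}
    (hn : -(y (n + 1) - 2 * y n + y (n - 1)) + (q n : ℂ) * y n = f n) :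
    f n * conj (y n) =
      ((‖y (n + 1) - y n‖ ^ 2 + q n * ‖y n‖ ^ 2 : ℝ) : ℂ) -
        ((y (n + 1) - y n) * conj (y (n + 1)) - (y n - y (n - 1)) * conj (y n)) := by
  push_cast
  rw [← Complex.mul_conj', ← Complex.mul_conj', ← hn, map_sub]
  ring

theorem sum_Icc_mul_conj_eq_energy_sub_flux {q : ℤ → ℝ} {f y : ℤ → ℂ} {m n : ℤ} (hmn : m ≤ n + 1)
    (h : ∀ k ∈ Icc m n, -(y (k + 1) - 2 * y k + y (k - 1)) + (q k : ℂ) * y k = f k) :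
    ∑ k ∈ Icc m n, f k * conj (y k) =
      ((∑ k ∈ Icc m n, (‖y (k + 1) - y k‖ ^ 2 + q k * ‖y k‖ ^ 2) : ℝ) : ℂ) -
        ((y (n + 1) - y n) * conj (y (n + 1)) - (y m - y (m - 1)) * conj (y m)) := by
  have := sum_Icc_sub_int (fun k => (y k - y (k - 1)) * conj (y k)) hmn
  simp only [add_sub_cancel_right] at this
  rw [sum_congr rfl fun k hk => mul_conj_eq_energy_sub_flux (h k hk), sum_sub_distrib, this]
  push_cast
  rfl

theorem re_impulse_flux_eq_zero {δ : ℝ} {y : ℤ → ℂ} (h₁ : y (-1) = y 1)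
    (h₂ : y 0 - y (-1) = Complex.exp (2 * (δ : ℂ) * Complex.I) * (y 2 - y 1)) :
    (Complex.exp ((δ : ℂ) * Complex.I) * ((y 2 - y 1) * conj (y 2)) -
      Complex.exp (-(δ : ℂ) * Complex.I) * ((y 0 - y (-1)) * conj (y 0))).re = 0 := by
  set u := Complex.exp ((δ : ℂ) * Complex.I)
  have hu : u * conj u = 1 := by
    rw [Complex.mul_conj', Complex.norm_exp_ofReal_mul_I]; norm_num
  have hneg : Complex.exp (-(δ : ℂ) * Complex.I) = conj u := by
    rw [← Complex.exp_conj]; simp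
  have hsq : Complex.exp (2 * (δ : ℂ) * Complex.I) = u ^ 2 := by
    rw [← Complex.exp_nat_mul]; push_cast; ring_nf
  rw [hsq] at h₂
  have hy0 : y 0 = y 1 + u ^ 2 * (y 2 - y 1) := by linear_combination h₂ + h₁
  have : u * ((y 2 - y 1) * conj (y 2)) - conj u * ((y 0 - y (-1)) * conj (y 0)) =
      (u - conj u) * ((y 2 - y 1) * conj (y 2 - y 1)) := by
    rw [h₂, hy0]
    simp only [map_add, map_mul, map_sub, map_pow]
    linear_combination (-(u * (y 2 - y 1) * conj (y 1) +
      conj u * ((y 2 - y 1) * (conj (y 2) - conj (y 1))) * (1 + u * conj u))) * hu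
  rw [hneg, this, Complex.sub_conj, Complex.mul_conj]
  simp

theorem Complex.exp_neg_ofReal_mul_I_re (x : ℝ) :
    (Complex.exp (-(x : ℂ) * Complex.I)).re = Real.cos x := by
  simpa [neg_mul] using Complex.exp_ofReal_mul_I_re (-x)

theorem Finset.sum_mul_mul_eq_mul_sum_of_forall_eq {ι R : Type*} [CommSemiring R] {s : Finset ι}
    {w g h : ι → R} {c : R} (hw : ∀ i ∈ s, w i = c) :
    ∑ i ∈ s, w i * g i * h i = c * ∑ i ∈ s, g i * h i := by
  rw [mul_sum]
  exact sum_congr rfl fun i hi => by rw [hw i hi, mul_assoc]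

theorem sigma_of_le_neg_one {δ : ℝ} {n : ℤ} (hn : n ≤ -1) :
    sigma δ n = Complex.exp (-(δ : ℂ) * Complex.I) :=
  if_pos hn

theorem sigma_of_nonneg {δ : ℝ} {n : ℤ} (hn : 0 ≤ n) :
    sigma δ n = Complex.exp ((δ : ℂ) * Complex.I) :=
  if_neg (by omega)

theorem weighted_energy_identity_general (δ : ℝ)
    (q : ℤ → ℝ) (f y : ℤ → ℂ) (hy : IsSolQ δ q f y)
    (a b : ℤ) (ha : a ≤ -1) (hb : 2 ≤ b) :
    Real.cos δ *
      ((∑ n ∈ Finset.Icc a (-1 : ℤ), (‖y (n + 1) - y n‖ ^ 2 + q n * ‖y n‖ ^ 2)) +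
       (∑ n ∈ Finset.Icc (2 : ℤ) b, (‖y (n + 1) - y n‖ ^ 2 + q n * ‖y n‖ ^ 2))) =
    (sigma δ b * (y (b + 1) - y b) * conj (y (b + 1)) -
      sigma δ (a - 1) * (y a - y (a - 1)) * conj (y a) +
      ((∑ n ∈ Finset.Icc a (-1 : ℤ), sigma δ n * f n * conj (y n)) +
       (∑ n ∈ Finset.Icc (2 : ℤ) b, sigma δ n * f n * conj (y n)))).re := by
  obtain ⟨heq, h₁, h₂⟩ := hy
  have hneg := sum_Icc_mul_conj_eq_energy_sub_flux (show a ≤ -1 + 1 by omega) fun k hk =>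
    heq k (by grind) (by grind)
  have hpos := sum_Icc_mul_conj_eq_energy_sub_flux (show 2 ≤ b + 1 by omega) fun k hk =>
    heq k (by grind) (by grind)
  rw [sum_mul_mul_eq_mul_sum_of_forall_eq fun n hn => sigma_of_le_neg_one (mem_Icc.1 hn).2,
    sum_mul_mul_eq_mul_sum_of_forall_eq fun n hn => sigma_of_nonneg (by grind), hneg, hpos,
    sigma_of_nonneg (by omega), sigma_of_le_neg_one (by omega), neg_add_cancel,
    show (2 : ℤ) - 1 = 1 by norm_num]
  set ca := Complex.exp (-(δ : ℂ) * Complex.I)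
  set cb := Complex.exp ((δ : ℂ) * Complex.I)
  trans (ca * ((∑ n ∈ Icc a (-1), (‖y (n + 1) - y n‖ ^ 2 + q n * ‖y n‖ ^ 2) : ℝ) : ℂ) +
      cb * ((∑ n ∈ Icc 2 b, (‖y (n + 1) - y n‖ ^ 2 + q n * ‖y n‖ ^ 2) : ℝ) : ℂ) +
      (cb * ((y 2 - y 1) * conj (y 2)) - ca * ((y 0 - y (-1)) * conj (y 0)))).re
  · rw [Complex.add_re, Complex.add_re, Complex.re_mul_ofReal, Complex.re_mul_ofReal,
      re_impulse_flux_eq_zero h₁ h₂, Complex.exp_neg_ofReal_mul_I_re, Complex.exp_ofReal_mul_I_re]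
    ring
  · congr 1
    ring

/-- the weighted energy identity (Lemma 6.1):
(cos δ)·[∑_{n=a}^{−1} + ∑_{n=2}^{b}] (|Δy_n|² + q_n |y_n|²)
 = Re{ σ_b (Δy_b) conj(y_{b+1}) − σ_{a−1} (Δy_{a−1}) conj(y_a)
       + [∑_{n=a}^{−1} + ∑_{n=2}^{b}] σ_n f_n conj(y_n) }. -/
theorem weighted_energy_identity (δ : ℝ) (hδ : 0 ≤ δ ∧ δ < Real.pi / 2)
    (q : ℤ → ℝ) (f y : ℤ → ℂ) (hy : IsSolQ δ q f y)
    (a b : ℤ) (ha : a ≤ -1) (hb : 2 ≤ b) :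
    Real.cos δ *
      ((∑ n ∈ Finset.Icc a (-1 : ℤ), (‖y (n + 1) - y n‖ ^ 2 + q n * ‖y n‖ ^ 2)) +
       (∑ n ∈ Finset.Icc (2 : ℤ) b, (‖y (n + 1) - y n‖ ^ 2 + q n * ‖y n‖ ^ 2))) =
    (sigma δ b * (y (b + 1) - y b) * conj (y (b + 1)) -
      sigma δ (a - 1) * (y a - y (a - 1)) * conj (y a) +
      ((∑ n ∈ Finset.Icc a (-1 : ℤ), sigma δ n * f n * conj (y n)) +
       (∑ n ∈ Finset.Icc (2 : ℤ) b, sigma δ n * f n * conj (y n)))).re :=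
  weighted_energy_identity_general δ q f y hy a b ha hb
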